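/- For every r ≥ 0, every t > 0 and all i, j ∈ {1,…,d}, ∫_{ℝ^d} e^{r|ψ|} |K^{ji}(ψ,t)| dψ ≤ a₁^{(d+2)/2} · e^{−b₀ t} · (t|α|)^{−1} · ( I_{d+1}(νt) + (δ_{ij}/2) · a₁^{−1} · I_{d−1}(νt) ), where ν := |α|² r² / Re α and δ_{ij} is the Kronecker delta. -/

import Mathlib

open MeasureTheory RealInnerProductSpace

/-- Rotation `e^{tS}x` given by the matrix exponential. -/
noncomputable def ouRot (d : ℕ) (S : Matrix (Fin d) (Fin d) ℝ) (t : ℝ)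
    (x : EuclideanSpace ℝ (Fin d)) : EuclideanSpace ℝ (Fin d) :=
  WithLp.toLp 2 (Matrix.mulVec (NormedSpace.exp (t • S)) x)

/-- The radial kernel `K(ψ,t) = (4παt)^{-d/2} exp(-δt - |ψ|²/(4αt))`. -/
noncomputable def ouK (d : ℕ) (α δ : ℂ) (ψ : EuclideanSpace ℝ (Fin d)) (t : ℝ) : ℂ :=
  (4 * (Real.pi : ℂ) * α * t) ^ (-(d : ℂ) / 2) *
    Complex.exp (-(δ * t) - ((‖ψ‖ ^ 2 : ℝ) : ℂ) / (4 * α * t))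

/-- The second-derivative radial kernel
`K^{ji}(ψ,t) = ((2tα)⁻² ⟨ψ, e^{tS}e_i⟩⟨ψ, e^{tS}e_j⟩ - (2tα)⁻¹ δ_{ij}) K(ψ,t)`. -/
noncomputable def ouKji (d : ℕ) (α δ : ℂ) (S : Matrix (Fin d) (Fin d) ℝ)
    (j i : Fin d) (ψ : EuclideanSpace ℝ (Fin d)) (t : ℝ) : ℂ :=
  (((2 * t * α)⁻¹) ^ 2 *
      ((⟪ψ, ouRot d S t (EuclideanSpace.single i (1 : ℝ))⟫ : ℝ) : ℂ) *
      ((⟪ψ, ouRot d S t (EuclideanSpace.single j (1 : ℝ))⟫ : ℝ) : ℂ)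
    - (2 * t * α)⁻¹ * (if i = j then 1 else 0)) * ouK d α δ ψ t

/-- `I_m(μ) = (2/Γ(d/2)) ∫_0^∞ s^m e^{-s² + 2√μ s} ds`. -/
noncomputable def ouI (d m : ℕ) (μ : ℝ) : ℝ :=
  (2 / Real.Gamma ((d : ℝ) / 2)) *
    ∫ s in Set.Ioi (0 : ℝ), s ^ m * Real.exp (-s ^ 2 + 2 * Real.sqrt μ * s)

open Set
open scoped Matrix

/-!
Since `e^{tS}` is orthogonal, `|⟨ψ, e^{tS}e_i⟩| ≤ |ψ|`, so `|K^{ji}(ψ,t)|` is bounded by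
`((2t|α|)⁻² |ψ|² + (2t|α|)⁻¹ δ_{ij}) |K(ψ,t)|`, and `|K(ψ,t)|` is a real Gaussian of rate
`β = Re α / (4|α|²t)`. Integrating in polar coordinates and rescaling `ρ = s / √β` turns each
radial moment `∫₀^∞ ρ^m e^{rρ - βρ²} dρ` into a multiple of `I_m(r²/(4β)) = I_m(νt)`; the
normalisations of `K` and of the sphere area then combine into the powers of `a₁`.
-/

section Orthogonal

variable {n : Type*} [Fintype n] [DecidableEq n]

theorem Matrix.transpose_exp_mul_exp_of_transpose_eq_neg {S : Matrix n n ℝ} (hS : Sᵀ = -S) :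
    (NormedSpace.exp S)ᵀ * NormedSpace.exp S = 1 := by
  rw [← Matrix.exp_transpose, hS, ← Matrix.exp_add_of_commute _ _ (Commute.refl S).neg_left,
    neg_add_cancel, NormedSpace.exp_zero]

theorem EuclideanSpace.norm_toLp_mulVec_of_transpose_mul_self {M : Matrix n n ℝ}
    (hM : Mᵀ * M = 1) (x : EuclideanSpace ℝ n) : ‖WithLp.toLp 2 (M *ᵥ x.ofLp)‖ = ‖x‖ := by
  rw [← sq_eq_sq₀ (norm_nonneg _) (norm_nonneg _), ← real_inner_self_eq_norm_sq,
    ← real_inner_self_eq_norm_sq]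
  simp only [PiLp.inner_apply, RCLike.inner_apply, conj_trivial]
  change (M *ᵥ x.ofLp) ⬝ᵥ (M *ᵥ x.ofLp) = x.ofLp ⬝ᵥ x.ofLp
  rw [Matrix.dotProduct_mulVec, ← Matrix.mulVec_transpose, Matrix.mulVec_mulVec, hM,
    Matrix.one_mulVec]

end Orthogonal

theorem norm_ouRot {d : ℕ} {S : Matrix (Fin d) (Fin d) ℝ} (hS : Sᵀ = -S) (t : ℝ)
    (x : EuclideanSpace ℝ (Fin d)) : ‖ouRot d S t x‖ = ‖x‖ :=
  EuclideanSpace.norm_toLp_mulVec_of_transpose_mul_self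
    (Matrix.transpose_exp_mul_exp_of_transpose_eq_neg
      (by rw [Matrix.transpose_smul, hS, smul_neg])) x

theorem norm_ouK {d : ℕ} {α : ℂ} (hα : 0 < α.re) (δ : ℂ) (ψ : EuclideanSpace ℝ (Fin d))
    {t : ℝ} (ht : 0 < t) :
    ‖ouK d α δ ψ t‖ = (4 * Real.pi * ‖α‖ * t) ^ (-(d : ℝ) / 2) * Real.exp (-δ.re * t) *
      Real.exp (-(α.re / (4 * ‖α‖ ^ 2 * t)) * ‖ψ‖ ^ 2) := by
  have hexp : (-(d : ℂ) / 2) = ((-(d : ℝ) / 2 : ℝ) : ℂ) := by push_cast; ring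
  rw [ouK, norm_mul, hexp, Complex.norm_cpow_real, Complex.norm_exp,
    mul_assoc ((4 * Real.pi * ‖α‖ * t) ^ _), ← Real.exp_add]
  congr 2
  · simp [abs_of_pos ht, Real.pi_pos.le]
  · have hsq : ‖α‖ ^ 2 = α.re ^ 2 + α.im ^ 2 := by
      rw [Complex.sq_norm, Complex.normSq_apply]; ring
    rw [hsq]
    generalize ‖ψ‖ ^ 2 = s
    have : α.re ^ 2 + α.im ^ 2 ≠ 0 := by positivity
    simp only [Complex.sub_re, Complex.neg_re, Complex.mul_re, Complex.ofReal_re,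
      Complex.ofReal_im, Complex.div_re, Complex.re_ofNat, Complex.im_ofNat, Complex.mul_im,
      Complex.normSq_apply, mul_zero, sub_zero, zero_mul, add_zero, zero_add, zero_div, neg_mul]
    field_simp
    ring

theorem norm_ouKji_le {d : ℕ} (α δ : ℂ) {S : Matrix (Fin d) (Fin d) ℝ} (hS : Sᵀ = -S)
    (i j : Fin d) (ψ : EuclideanSpace ℝ (Fin d)) {t : ℝ} (ht : 0 ≤ t) :
    ‖ouKji d α δ S j i ψ t‖ ≤ (((2 * t * ‖α‖)⁻¹) ^ 2 * ‖ψ‖ ^ 2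
      + (2 * t * ‖α‖)⁻¹ * (if i = j then 1 else 0)) * ‖ouK d α δ ψ t‖ := by
  have hnorm : ‖(2 * (t : ℂ) * α)⁻¹‖ = (2 * t * ‖α‖)⁻¹ := by
    simp [abs_of_nonneg ht]
  have hcoord (k : Fin d) :
      ‖((⟪ψ, ouRot d S t (EuclideanSpace.single k (1 : ℝ))⟫ : ℝ) : ℂ)‖ ≤ ‖ψ‖ := by
    rw [Complex.norm_real, Real.norm_eq_abs]
    simpa [norm_ouRot hS] using abs_real_inner_le_norm ψ (ouRot d S t (EuclideanSpace.single k 1))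
  rw [ouKji, norm_mul]
  gcongr
  refine (norm_sub_le _ _).trans (add_le_add ?_ ?_)
  · rw [norm_mul, norm_mul, norm_pow, hnorm, sq ‖ψ‖, ← mul_assoc]
    gcongr
    exacts [hcoord i, hcoord j]
  · split_ifs <;> simp [abs_of_nonneg ht]

section GaussianMoments

variable {β : ℝ}

theorem mul_sub_half_mul_sq_le (hβ : 0 < β) (r ρ : ℝ) :
    r * ρ - β / 2 * ρ ^ 2 ≤ r ^ 2 / (2 * β) := by
  rw [le_div_iff₀ (by positivity)]
  nlinarith [sq_nonneg (β * ρ - r)]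

theorem integrableOn_pow_mul_exp_mul_sub_mul_sq (m : ℕ) (hβ : 0 < β) (r : ℝ) :
    IntegrableOn (fun ρ => ρ ^ m * Real.exp (r * ρ - β * ρ ^ 2)) (Ioi 0) := by
  have hdom : IntegrableOn
      (fun ρ => Real.exp (r ^ 2 / (2 * β)) * (ρ ^ (m : ℝ) * Real.exp (-(β / 2) * ρ ^ 2))) (Ioi 0) :=
    (integrableOn_rpow_mul_exp_neg_mul_sq (half_pos hβ)
      (by linarith [(Nat.cast_nonneg m : (0 : ℝ) ≤ m)])).const_mul _
  refine hdom.mono' (by fun_prop) ?_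
  filter_upwards [ae_restrict_mem measurableSet_Ioi] with ρ (hρ : 0 < ρ)
  have hsplit : r * ρ - β * ρ ^ 2 = (r * ρ - β / 2 * ρ ^ 2) + -(β / 2) * ρ ^ 2 := by ring
  rw [Real.norm_eq_abs, abs_of_nonneg (by positivity), Real.rpow_natCast, hsplit, Real.exp_add]
  calc ρ ^ m * (Real.exp (r * ρ - β / 2 * ρ ^ 2) * Real.exp (-(β / 2) * ρ ^ 2))
      = Real.exp (r * ρ - β / 2 * ρ ^ 2) * (ρ ^ m * Real.exp (-(β / 2) * ρ ^ 2)) := by ring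
    _ ≤ _ := by gcongr; exact mul_sub_half_mul_sq_le hβ r ρ

theorem integral_pow_mul_exp_mul_sub_mul_sq_Ioi (m : ℕ) (hβ : 0 < β) (r : ℝ) :
    ∫ ρ in Ioi 0, ρ ^ m * Real.exp (r * ρ - β * ρ ^ 2)
      = (√β)⁻¹ ^ (m + 1) * ∫ s in Ioi 0, s ^ m * Real.exp (-s ^ 2 + r / √β * s) := by
  have hc : 0 < (√β)⁻¹ := inv_pos.mpr (Real.sqrt_pos.mpr hβ)
  have h := integral_comp_mul_left_Ioi (fun ρ => ρ ^ m * Real.exp (r * ρ - β * ρ ^ 2)) 0 hc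
  have hsubst (s : ℝ) : ((√β)⁻¹ * s) ^ m * Real.exp (r * ((√β)⁻¹ * s) - β * ((√β)⁻¹ * s) ^ 2)
      = (√β)⁻¹ ^ m * (s ^ m * Real.exp (-s ^ 2 + r / √β * s)) := by
    have hβ' : β * ((√β)⁻¹) ^ 2 = 1 := by
      rw [inv_pow, Real.sq_sqrt hβ.le, mul_inv_cancel₀ hβ.ne']
    rw [show r * ((√β)⁻¹ * s) - β * ((√β)⁻¹ * s) ^ 2
      = -(β * ((√β)⁻¹) ^ 2) * s ^ 2 + r / √β * s by ring, hβ', neg_mul, one_mul, mul_pow,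
      mul_assoc]
  simp only [hsubst, integral_const_mul, mul_zero, smul_eq_mul] at h
  rw [pow_succ', mul_assoc, h, ← mul_assoc, mul_inv_cancel₀ hc.ne', one_mul]

end GaussianMoments

theorem EuclideanSpace.integral_fun_norm {ι : Type*} [Fintype ι] [Nonempty ι]
    {F : Type*} [NormedAddCommGroup F] [NormedSpace ℝ F] (f : ℝ → F) :
    ∫ x : EuclideanSpace ℝ ι, f ‖x‖
      = (2 * √Real.pi ^ Fintype.card ι / Real.Gamma (Fintype.card ι / 2)) •
        ∫ y in Ioi 0, y ^ (Fintype.card ι - 1) • f y := by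
  have hcard : (0 : ℝ) < Fintype.card ι := by exact_mod_cast Fintype.card_pos
  rw [integral_fun_norm_addHaar, finrank_euclideanSpace, measureReal_def,
    EuclideanSpace.volume_ball, ENNReal.toReal_mul, ENNReal.toReal_pow,
    ENNReal.toReal_ofReal zero_le_one, ENNReal.toReal_ofReal (by positivity), one_pow, one_mul,
    Real.Gamma_add_one (by positivity), ← Nat.cast_smul_eq_nsmul ℝ, smul_smul]
  congr 1
  field_simp

theorem EuclideanSpace.integrable_norm_pow_mul_exp_mul_sub_mul_sq {ι : Type*} [Fintype ι]
    [Nonempty ι] (k : ℕ) {β : ℝ} (hβ : 0 < β) (r : ℝ) :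
    Integrable (fun x : EuclideanSpace ℝ ι => ‖x‖ ^ k * Real.exp (r * ‖x‖ - β * ‖x‖ ^ 2)) := by
  refine (integrable_fun_norm_addHaar volume
    (f := fun ρ => ρ ^ k * Real.exp (r * ρ - β * ρ ^ 2))).mpr ?_
  refine (integrableOn_pow_mul_exp_mul_sub_mul_sq (Module.finrank ℝ (EuclideanSpace ℝ ι) - 1 + k)
    hβ r).congr_fun (fun ρ _ => ?_) measurableSet_Ioi
  simp only [smul_eq_mul, pow_add, mul_assoc]

theorem integral_norm_pow_mul_exp_mul_sub_mul_sq_eq_ouI {d : ℕ} (hd : 0 < d) (k : ℕ) {β : ℝ}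
    (hβ : 0 < β) {r : ℝ} (hr : 0 ≤ r) :
    ∫ ψ : EuclideanSpace ℝ (Fin d), ‖ψ‖ ^ k * Real.exp (r * ‖ψ‖ - β * ‖ψ‖ ^ 2)
      = (Real.pi / β) ^ ((d : ℝ) / 2) * (√β ^ k)⁻¹ * ouI d (d - 1 + k) (r ^ 2 / (4 * β)) := by
  have : Nonempty (Fin d) := ⟨⟨0, hd⟩⟩
  have hlin : 2 * √(r ^ 2 / (4 * β)) = r / √β := by
    rw [Real.sqrt_div (sq_nonneg r), Real.sqrt_sq hr, Real.sqrt_mul zero_le_four,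
      show (4 : ℝ) = 2 ^ 2 by norm_num, Real.sqrt_sq zero_le_two]
    field_simp
  have hΓ : 0 < Real.Gamma ((d : ℝ) / 2) := Real.Gamma_pos_of_pos (by positivity)
  have hsq : 0 < √β := Real.sqrt_pos.mpr hβ
  rw [EuclideanSpace.integral_fun_norm (fun ρ => ρ ^ k * Real.exp (r * ρ - β * ρ ^ 2))]
  simp only [Fintype.card_fin, smul_eq_mul, ← mul_assoc, ← pow_add]
  rw [integral_pow_mul_exp_mul_sub_mul_sq_Ioi _ hβ, ouI, hlin,
    Real.rpow_div_two_eq_sqrt _ (div_pos Real.pi_pos hβ).le, Real.rpow_natCast,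
    Real.sqrt_div' _ hβ.le, show d - 1 + k + 1 = d + k by omega]
  generalize ∫ s in Ioi (0 : ℝ), s ^ (d - 1 + k) * Real.exp (-s ^ 2 + r / √β * s) = J
  rw [div_pow, pow_add, inv_pow, inv_pow]
  field_simp

theorem integral_exp_mul_norm_le_of_norm_le_gaussian {E : Type*} [NormedAddCommGroup E] {d : ℕ}
    (hd : 0 < d) {F : EuclideanSpace ℝ (Fin d) → E} {β c₀ c₂ r : ℝ} (hβ : 0 < β) (hr : 0 ≤ r)
    (hF : ∀ ψ, ‖F ψ‖ ≤ (c₂ * ‖ψ‖ ^ 2 + c₀) * Real.exp (-β * ‖ψ‖ ^ 2)) :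
    ∫ ψ, Real.exp (r * ‖ψ‖) * ‖F ψ‖ ≤ (Real.pi / β) ^ ((d : ℝ) / 2) *
      (c₂ / β * ouI d (d + 1) (r ^ 2 / (4 * β)) + c₀ * ouI d (d - 1) (r ^ 2 / (4 * β))) := by
  have : Nonempty (Fin d) := ⟨⟨0, hd⟩⟩
  set g : ℕ → EuclideanSpace ℝ (Fin d) → ℝ :=
    fun k ψ => ‖ψ‖ ^ k * Real.exp (r * ‖ψ‖ - β * ‖ψ‖ ^ 2)
  have hg (k : ℕ) : Integrable (g k) :=
    EuclideanSpace.integrable_norm_pow_mul_exp_mul_sub_mul_sq k hβ r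
  have hmajorant (ψ : EuclideanSpace ℝ (Fin d)) :
      Real.exp (r * ‖ψ‖) * ‖F ψ‖ ≤ c₂ * g 2 ψ + c₀ * g 0 ψ :=
    calc Real.exp (r * ‖ψ‖) * ‖F ψ‖
        ≤ Real.exp (r * ‖ψ‖) * ((c₂ * ‖ψ‖ ^ 2 + c₀) * Real.exp (-β * ‖ψ‖ ^ 2)) := by
          gcongr; exact hF ψ
      _ = c₂ * g 2 ψ + c₀ * g 0 ψ := by
          simp only [g, sub_eq_add_neg, Real.exp_add, neg_mul]
          ring
  calc ∫ ψ, Real.exp (r * ‖ψ‖) * ‖F ψ‖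
      ≤ ∫ ψ, c₂ * g 2 ψ + c₀ * g 0 ψ :=
        integral_mono_of_nonneg (.of_forall fun ψ => by positivity)
          (((hg 2).const_mul _).add ((hg 0).const_mul _)) (.of_forall hmajorant)
    _ = c₂ * (∫ ψ, g 2 ψ) + c₀ * ∫ ψ, g 0 ψ := by
        rw [integral_add ((hg 2).const_mul _) ((hg 0).const_mul _), integral_const_mul,
          integral_const_mul]
    _ = _ := by
        simp only [g, integral_norm_pow_mul_exp_mul_sub_mul_sq_eq_ouI hd _ hβ hr]
        rw [Real.sq_sqrt hβ.le, pow_zero, inv_one, mul_one, add_zero,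
          show d - 1 + 2 = d + 1 by omega]
        ring

theorem ouKji_exp_weighted_integral_bound_general
    (d : ℕ) (α δ : ℂ) (hα : 0 < α.re)
    (S : Matrix (Fin d) (Fin d) ℝ) (hS : S.transpose = -S)
    (r : ℝ) (hr : 0 ≤ r) (t : ℝ) (ht : 0 < t) (i j : Fin d) :
    (∫ ψ : EuclideanSpace ℝ (Fin d), Real.exp (r * ‖ψ‖) * ‖ouKji d α δ S j i ψ t‖)
      ≤ (‖α‖ / α.re) ^ (((d : ℝ) + 2) / 2) * Real.exp (-δ.re * t) *
        (t * ‖α‖)⁻¹ *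
        (ouI d (d + 1) ((‖α‖ ^ 2 * r ^ 2 / α.re) * t)
          + ((if i = j then (1:ℝ) else 0) / 2) * ((‖α‖ / α.re)⁻¹) *
            ouI d (d - 1) ((‖α‖ ^ 2 * r ^ 2 / α.re) * t)) := by
  have ha : 0 < ‖α‖ := norm_pos_iff.mpr fun h => by simp [h] at hα
  set β := α.re / (4 * ‖α‖ ^ 2 * t) with hβ_def
  have hβ : 0 < β := by positivity
  set X := (4 * Real.pi * ‖α‖ * t) ^ (-(d : ℝ) / 2) with hX_def
  set B := (2 * t * ‖α‖)⁻¹ with hB_def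
  have hK (ψ : EuclideanSpace ℝ (Fin d)) : ‖ouKji d α δ S j i ψ t‖
      ≤ (X * Real.exp (-δ.re * t) * B ^ 2 * ‖ψ‖ ^ 2
        + X * Real.exp (-δ.re * t) * B * (if i = j then 1 else 0)) * Real.exp (-β * ‖ψ‖ ^ 2) := by
    refine (norm_ouKji_le α δ hS i j ψ ht.le).trans_eq ?_
    rw [norm_ouK hα δ ψ ht, ← hβ_def]
    ring
  refine (integral_exp_mul_norm_le_of_norm_le_gaussian i.pos hβ hr hK).trans_eq ?_
  have hscale : X * (Real.pi / β) ^ ((d : ℝ) / 2) = (‖α‖ / α.re) ^ ((d : ℝ) / 2) := by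
    rw [hX_def, neg_div, Real.rpow_neg (by positivity), inv_mul_eq_div,
      ← Real.div_rpow (by positivity) (by positivity), hβ_def]
    congr 1
    field_simp
  have hμ : r ^ 2 / (4 * β) = ‖α‖ ^ 2 * r ^ 2 / α.re * t := by
    rw [hβ_def]; field_simp
  rw [hμ, add_div, div_self two_ne_zero, Real.rpow_add (by positivity), Real.rpow_one, ← hscale]
  generalize (Real.pi / β) ^ ((d : ℝ) / 2) = P
  generalize ouI d (d + 1) (‖α‖ ^ 2 * r ^ 2 / α.re * t) = I₁
  generalize ouI d (d - 1) (‖α‖ ^ 2 * r ^ 2 / α.re * t) = I₀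
  rw [hβ_def, hB_def]
  field_simp
  ring

/-- exponentially weighted integral bound for the kernel `K^{ji}`. -/
theorem ouKji_exp_weighted_integral_bound
    (d : ℕ) (hd : 1 ≤ d) (α δ : ℂ) (hα : 0 < α.re)
    (S : Matrix (Fin d) (Fin d) ℝ) (hS : S.transpose = -S)
    (r : ℝ) (hr : 0 ≤ r) (t : ℝ) (ht : 0 < t) (i j : Fin d) :
    (∫ ψ : EuclideanSpace ℝ (Fin d), Real.exp (r * ‖ψ‖) * ‖ouKji d α δ S j i ψ t‖)
      ≤ (‖α‖ / α.re) ^ (((d : ℝ) + 2) / 2) * Real.exp (-δ.re * t) *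
        (t * ‖α‖)⁻¹ *
        (ouI d (d + 1) ((‖α‖ ^ 2 * r ^ 2 / α.re) * t)
          + ((if i = j then (1:ℝ) else 0) / 2) * ((‖α‖ / α.re)⁻¹) *
            ouI d (d - 1) ((‖α‖ ^ 2 * r ^ 2 / α.re) * t)) :=
  ouKji_exp_weighted_integral_bound_general d α δ hα S hS r hr t ht i j
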